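/- For n ≥ 2, the number of full binary trees with n leaves that avoid the pattern t2 = node(L, node(node(L,L), L)) equals the number of binary words of length n-2, i.e., 2^(n-2), and an explicit bijection ω is given by ω(node Tl Tr) = κ1(Tr) · κ0(Tl) where κ_i(leaf) = ε and κ_i(T) = i·ω(T) otherwise. -/

import Mathlib

inductive BTree : Type
  | leaf : BTree
  | node : BTree → BTree → BTree
  deriving DecidableEq

namespace BTree

def leaves : BTree → ℕ
  | leaf => 1
  | node l r => leaves l + leaves r

def Matches : BTree → BTree → Bool
  | _, leaf => true
  | leaf, node _ _ => false
  | node l r, node tl tr => Matches l tl && Matches r tr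

def Contains : BTree → BTree → Bool
  | leaf, t => Matches leaf t
  | node l r, t => Matches (node l r) t || Contains l t || Contains r t

def Avoids (T t : BTree) : Prop := Contains T t = false

end BTree

namespace BTree

/-- `kappa i T` is the empty word if `T` is a leaf, and `i · ω(T)` otherwise. -/
def kappa (i : Bool) : BTree → List Bool
  | leaf => []
  | node l r => i :: (kappa true r ++ kappa false l)

/-- `ω(node Tl Tr) = κ₁(Tr) · κ₀(Tl)` (with `true` playing the role of the letter 1). -/
def omega : BTree → List Bool
  | leaf => []
  | node l r => kappa true r ++ kappa false l

end BTree

/-!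
Among `t₂`-avoiding trees, a right child is either a leaf or has a leaf as its left child. So a
non-leaf avoiding tree is `node leaf leaf`, `node T leaf`, or `node l (node leaf r)`, and `ω` maps
these to `[]`, `0 :: ω T` and `1 :: ω (node l r)`. Reading a word from the left therefore rebuilds
the tree uniquely, and every word arises.
-/

namespace BTree

local notation "t₂" => node leaf (node (node leaf leaf) leaf)

theorem one_le_leaves : ∀ T : BTree, 1 ≤ T.leaves
  | leaf => le_rfl
  | node l _ => le_add_right (one_le_leaves l)

theorem length_kappa (i : Bool) : ∀ T : BTree, (kappa i T).length = T.leaves - 1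
  | leaf => rfl
  | node l r => by
    have := one_le_leaves l
    have := one_le_leaves r
    simp only [kappa, leaves, List.length_cons, List.length_append, length_kappa]
    omega

theorem length_omega : ∀ T : BTree, (omega T).length = T.leaves - 2
  | leaf => rfl
  | node l r => by
    have := one_le_leaves l
    have := one_le_leaves r
    simp only [omega, leaves, List.length_append, length_kappa]
    omega

theorem omega_node_node_leaf (l r : BTree) :
    omega (node (node l r) leaf) = false :: omega (node l r) := by
  simp [omega, kappa]

theorem omega_node_node_leaf_left (l r : BTree) :
    omega (node l (node leaf r)) = true :: omega (node l r) := by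
  simp [omega, kappa]

theorem avoids_node_leaf_iff (T : BTree) : (node T leaf).Avoids t₂ ↔ T.Avoids t₂ := by
  simp [Avoids, Contains, Matches]

theorem avoids_node_node_leaf_left_iff (l r : BTree) :
    (node l (node leaf r)).Avoids t₂ ↔ (node l r).Avoids t₂ := by
  cases r with
  | leaf => simp [Avoids, Contains, Matches]
  | node => simp [Avoids, Contains, Matches]; tauto

theorem not_avoids_node_node_node (l a b c : BTree) :
    ¬ (node l (node (node a b) c)).Avoids t₂ := by
  simp [Avoids, Contains, Matches]

def childrenOfWord : List Bool → BTree × BTree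
  | [] => (leaf, leaf)
  | false :: w => (node (childrenOfWord w).1 (childrenOfWord w).2, leaf)
  | true :: w => ((childrenOfWord w).1, node leaf (childrenOfWord w).2)

def ofWord (w : List Bool) : BTree := node (childrenOfWord w).1 (childrenOfWord w).2

theorem ofWord_false (w : List Bool) : ofWord (false :: w) = node (ofWord w) leaf := rfl

theorem omega_ofWord : ∀ w : List Bool, omega (ofWord w) = w
  | [] => rfl
  | false :: w => by rw [ofWord_false, ofWord, omega_node_node_leaf, ← ofWord, omega_ofWord w]
  | true :: w => by
    rw [ofWord, childrenOfWord, omega_node_node_leaf_left, ← ofWord, omega_ofWord w]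

theorem leaves_ofWord : ∀ w : List Bool, (ofWord w).leaves = w.length + 2
  | [] => rfl
  | false :: w => by
    rw [ofWord_false, leaves, leaves_ofWord w, leaves, List.length_cons]
  | true :: w => by
    have := leaves_ofWord w
    simp only [ofWord, childrenOfWord, leaves, List.length_cons] at this ⊢
    omega

theorem avoids_ofWord : ∀ w : List Bool, (ofWord w).Avoids t₂
  | [] => rfl
  | false :: w => by rw [ofWord_false, avoids_node_leaf_iff]; exact avoids_ofWord w
  | true :: w => by
    rw [ofWord, childrenOfWord, avoids_node_node_leaf_left_iff]
    exact avoids_ofWord w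

theorem ofWord_omega {T : BTree} (hT : T.Avoids t₂) (hne : T ≠ leaf) : ofWord (omega T) = T := by
  generalize hw : omega T = w
  induction w generalizing T with
  | nil =>
    obtain _ | ⟨_ | _, _ | _⟩ := T
    · exact absurd rfl hne
    · rfl
    all_goals simp [omega, kappa] at hw
  | cons b w ih =>
    obtain _ | ⟨l, _ | ⟨_ | ⟨a, c⟩, r⟩⟩ := T
    · exact absurd rfl hne
    · obtain _ | ⟨a, c⟩ := l
      · cases hw
      · rw [omega_node_node_leaf, List.cons.injEq] at hw
        obtain ⟨rfl, hw⟩ := hw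
        rw [ofWord_false, ih ((avoids_node_leaf_iff _).1 hT) nofun hw]
    · rw [omega_node_node_leaf_left, List.cons.injEq] at hw
      obtain ⟨rfl, hw⟩ := hw
      obtain ⟨hl, hr⟩ := node.inj (ih ((avoids_node_node_leaf_left_iff l r).1 hT) nofun hw)
      rw [ofWord, childrenOfWord, hl, hr]
    · exact absurd hT (not_avoids_node_node_node l a c r)

end BTree

theorem stmt_18 (n : ℕ) (hn : 2 ≤ n) :
    Nat.card {T : BTree //
        T.leaves = n ∧ T.Avoids (.node .leaf (.node (.node .leaf .leaf) .leaf))} =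
      2 ^ (n - 2) ∧
    Set.BijOn BTree.omega
      {T : BTree |
        T.leaves = n ∧ T.Avoids (.node .leaf (.node (.node .leaf .leaf) .leaf))}
      {w : List Bool | w.length = n - 2} := by
  have hbij : Set.BijOn BTree.omega
      {T : BTree | T.leaves = n ∧ T.Avoids (.node .leaf (.node (.node .leaf .leaf) .leaf))}
      {w : List Bool | w.length = n - 2} := by
    refine Set.InvOn.bijOn (f' := BTree.ofWord) ⟨?_, fun w _ => BTree.omega_ofWord w⟩ ?_ ?_
    · rintro T ⟨hleaves, hT⟩
      exact BTree.ofWord_omega hT (by rintro rfl; simp [BTree.leaves] at hleaves; omega)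
    · rintro T ⟨rfl, -⟩
      exact BTree.length_omega T
    · intro w (hw : w.length = n - 2)
      exact ⟨by rw [BTree.leaves_ofWord]; omega, BTree.avoids_ofWord w⟩
  refine ⟨(Nat.card_congr hbij.equiv).trans ?_, hbij⟩
  change Nat.card (List.Vector Bool (n - 2)) = _
  simp [Nat.card_eq_fintype_card, card_vector]
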